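/- Let R be a commutative Noetherian ring and M a Matlis reflexive R-module. Then every submodule of M is Matlis reflexive and every quotient module of M is Matlis reflexive. -/
import Mathlib


universe u

variable (R : Type u) [CommRing R]

/-- A morphism `f : F → M` with `F` flat is a flat precover if every morphism from a
flat module to `M` factors through `f`. -/
def IsFlatPrecover {F M : Type u} [AddCommGroup F] [AddCommGroup M] [Module R F]
    [Module R M] (f : F →ₗ[R] M) : Prop :=
  Module.Flat R F ∧
    ∀ (F' : Type u) [AddCommGroup F'] [Module R F'], Module.Flat R F' →
      ∀ g : F' →ₗ[R] M, ∃ h : F' →ₗ[R] F, f ∘ₗ h = g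

/-- A flat precover `f : F → M` is a flat cover if every `h : F → F` with `f ∘ h = f`
is an automorphism. -/
def IsFlatCover {F M : Type u} [AddCommGroup F] [AddCommGroup M] [Module R F]
    [Module R M] (f : F →ₗ[R] M) : Prop :=
  IsFlatPrecover R f ∧ ∀ h : F →ₗ[R] F, f ∘ₗ h = f → Function.Bijective h

/-- A morphism `i : M → E` is an injective envelope if `E` is injective, `i` is
injective, and the image of `i` is an essential submodule of `E`. -/
def IsInjectiveEnvelope {M E : Type u} [AddCommGroup M] [AddCommGroup E] [Module R M]
    [Module R E] (i : M →ₗ[R] E) : Prop :=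
  Module.Injective R E ∧ Function.Injective i ∧
    ∀ N : Submodule R E, N ≠ ⊥ → N ⊓ LinearMap.range i ≠ ⊥

/-- An injective cogenerator is an injective module `E` such that `Hom(N, E) ≠ 0`
for every nonzero module `N`. -/
def IsInjectiveCogenerator (E : Type u) [AddCommGroup E] [Module R E] : Prop :=
  Module.Injective R E ∧
    ∀ (N : Type u) [AddCommGroup N] [Module R N], (∃ x : N, x ≠ 0) →
      ∃ g : N →ₗ[R] E, g ≠ 0

/-- Given a module `D` (to be thought of as `⊕ E(R/𝔫)`, the direct sum of injective
envelopes of the residue fields of all maximal ideals, so that `Hom_R(-, D)` is the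
Matlis dual), a module `M` is Matlis reflexive if the evaluation map
`M → Hom_R(Hom_R(M, D), D)` is an isomorphism. -/
def IsMatlisReflexive (D : Type u) [AddCommGroup D] [Module R D]
    (M : Type u) [AddCommGroup M] [Module R M] : Prop :=
  Function.Bijective (LinearMap.applyₗ : M →ₗ[R] ((M →ₗ[R] D) →ₗ[R] D))

open DirectSum

section MyAux
variable {R : Type u} [CommRing R]

variable {R : Type u} [CommRing R]

/-- A direct sum of injective modules over a Noetherian ring is injective. -/
lemma MyAux.directSum_injective [IsNoetherianRing R] {ι : Type u} (En : ι → Type u)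
    [∀ i, AddCommGroup (En i)] [∀ i, Module R (En i)]
    (hEn : ∀ i, Module.Injective R (En i)) :
    Module.Injective R (⨁ i, En i) := by
  classical
  apply Module.Baer.injective
  intro I g
  have hBaer : ∀ i, Module.Baer R (En i) := fun i => Module.Baer.of_injective (hEn i)
  choose f hf using fun i => hBaer i I ((DirectSum.component R ι En i) ∘ₗ g)
  obtain ⟨T, hT⟩ := IsNoetherian.noetherian I
  have hmemT : ∀ t ∈ T, t ∈ I := fun t ht => by
    rw [← hT]; exact Submodule.subset_span ht
  set S : Finset ι := T.attach.biUnion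
    (fun t => DFinsupp.support (g ⟨t.1, hmemT t.1 t.2⟩)) with hS
  -- all values of g are supported in S
  have hsupp : ∀ (x : R) (hx : x ∈ I), ∀ q ∉ S, g ⟨x, hx⟩ q = 0 := by
    have main : ∀ (x : R) (hx : x ∈ Submodule.span R (T : Set R)),
        ∀ (h' : x ∈ I), ∀ q ∉ S, g ⟨x, h'⟩ q = 0 := by
      intro x hx
      induction hx using Submodule.span_induction with
      | mem t ht =>
        intro h' q hq
        by_contra hne
        exact hq (Finset.mem_biUnion.mpr ⟨⟨t, ht⟩, Finset.mem_attach _ _,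
          DFinsupp.mem_support_iff.mpr (by
            convert hne using 3)⟩)
      | zero =>
        intro h' q hq
        have : (⟨(0:R), h'⟩ : I) = 0 := rfl
        rw [this, map_zero]; rfl
      | add a b ha hb iha ihb =>
        intro h' q hq
        have hA : a ∈ I := by rw [← hT]; exact ha
        have hB : b ∈ I := by rw [← hT]; exact hb
        have : (⟨a + b, h'⟩ : I) = ⟨a, hA⟩ + ⟨b, hB⟩ := rfl
        rw [this, map_add, DirectSum.add_apply, iha hA q hq, ihb hB q hq, add_zero]
      | smul r a ha iha =>
        intro h' q hq
        have hA : a ∈ I := by rw [← hT]; exact ha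
        have : (⟨r • a, h'⟩ : I) = r • ⟨a, hA⟩ := rfl
        rw [this, map_smul, DFinsupp.smul_apply, iha hA q hq, smul_zero]
    intro x hx
    exact main x (by rw [hT]; exact hx) hx
  refine ⟨∑ i ∈ S, (DirectSum.lof R ι En i) ∘ₗ (f i), ?_⟩
  intro x hx
  set d := g ⟨x, hx⟩ with hd
  have hdsupp : DFinsupp.support d ⊆ S := by
    intro q hq
    by_contra hqS
    exact DFinsupp.mem_support_iff.mp hq (hsupp x hx q hqS)
  have step1 : (∑ i ∈ S, (DirectSum.lof R ι En i) ∘ₗ (f i)) x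
      = ∑ i ∈ S, DirectSum.of En i (d i) := by
    rw [LinearMap.sum_apply]
    refine Finset.sum_congr rfl fun i _ => ?_
    rw [LinearMap.comp_apply, hf i x hx, DirectSum.lof_eq_of]
    rfl
  have step2 : ∑ i ∈ S, DirectSum.of En i (d i)
      = ∑ i ∈ DFinsupp.support d, DirectSum.of En i (d i) :=
    (Finset.sum_subset hdsupp fun i _ hi => by
      rw [DFinsupp.notMem_support_iff.mp hi, map_zero]).symm
  rw [step1, step2, DirectSum.sum_support_of]

variable {D : Type u} [AddCommGroup D] [Module R D]

/-- If `D` is a cogenerator (detects nonzero elements), the evaluation map is injective. -/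
lemma MyAux.ev_injective
    (hcog : ∀ (X : Type u) [AddCommGroup X] [Module R X] (x : X), x ≠ 0 →
      ∃ f : X →ₗ[R] D, f x ≠ 0)
    (X : Type u) [AddCommGroup X] [Module R X] :
    Function.Injective (LinearMap.applyₗ : X →ₗ[R] ((X →ₗ[R] D) →ₗ[R] D)) := by
  intro a b hab
  by_contra hne
  obtain ⟨f, hf⟩ := hcog X (a - b) (sub_ne_zero.mpr hne)
  apply hf
  have := DFunLike.congr_fun hab f
  simp only [LinearMap.applyₗ_apply_apply] at this
  rw [map_sub, this, sub_self]

lemma MyAux.ext_lemma (hD : Module.Injective R D) {A B : Type u} [AddCommGroup A]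
    [AddCommGroup B] [Module R A] [Module R B] (f : A →ₗ[R] B) (hf : Function.Injective f)
    (g : A →ₗ[R] D) : ∃ h : B →ₗ[R] D, h ∘ₗ f = g := by
  obtain ⟨h, hh⟩ := hD.out f hf g
  exact ⟨h, LinearMap.ext hh⟩

lemma MyAux.ev_quot_surjective (hD : Module.Injective R D) {M : Type u} [AddCommGroup M]
    [Module R M]
    (hM : Function.Surjective (LinearMap.applyₗ : M →ₗ[R] ((M →ₗ[R] D) →ₗ[R] D)))
    (N : Submodule R M) :
    Function.Surjective
      (LinearMap.applyₗ : (M ⧸ N) →ₗ[R] (((M ⧸ N) →ₗ[R] D) →ₗ[R] D)) := by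
  intro z
  have hπinj : Function.Injective (LinearMap.lcomp R D N.mkQ) := by
    intro f₁ f₂ h
    ext q
    exact DFunLike.congr_fun h q
  obtain ⟨w, hw⟩ := MyAux.ext_lemma hD (LinearMap.lcomp R D N.mkQ) hπinj z
  obtain ⟨m, rfl⟩ := hM w
  refine ⟨N.mkQ m, ?_⟩
  ext f
  exact DFunLike.congr_fun hw f

lemma MyAux.ev_sub_surjective (hD : Module.Injective R D)
    (hcog : ∀ (X : Type u) [AddCommGroup X] [Module R X] (x : X), x ≠ 0 →
      ∃ f : X →ₗ[R] D, f x ≠ 0)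
    {M : Type u} [AddCommGroup M] [Module R M]
    (hM : Function.Surjective (LinearMap.applyₗ : M →ₗ[R] ((M →ₗ[R] D) →ₗ[R] D)))
    (N : Submodule R M) :
    Function.Surjective
      (LinearMap.applyₗ : N →ₗ[R] ((N →ₗ[R] D) →ₗ[R] D)) := by
  intro z
  -- ι** z has a preimage m under ev_M
  obtain ⟨m, hm⟩ := hM ((LinearMap.lcomp R D (LinearMap.lcomp R D N.subtype)) z)
  -- m ∈ N
  have hmN : m ∈ N := by
    rw [← Submodule.Quotient.mk_eq_zero N]
    apply MyAux.ev_injective hcog (M ⧸ N)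
    rw [map_zero]
    ext f
    have h1 : (LinearMap.applyₗ (Submodule.Quotient.mk (p := N) m) :
        ((M ⧸ N) →ₗ[R] D) →ₗ[R] D) f = (f ∘ₗ N.mkQ) m := rfl
    rw [h1]
    have h2 : (f ∘ₗ N.mkQ) m
        = (LinearMap.applyₗ m : (M →ₗ[R] D) →ₗ[R] D) (f ∘ₗ N.mkQ) := rfl
    rw [h2, hm]
    have h3 : (f ∘ₗ N.mkQ) ∘ₗ N.subtype = 0 := by
      ext n
      have hn : N.mkQ (n : M) = 0 := (Submodule.Quotient.mk_eq_zero N).mpr n.2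
      simp only [LinearMap.comp_apply, Submodule.subtype_apply, hn, map_zero,
        LinearMap.zero_apply]
    show z ((f ∘ₗ N.mkQ) ∘ₗ N.subtype) = (0 : ((M ⧸ N) →ₗ[R] D) →ₗ[R] D) f
    rw [h3, map_zero]
    rfl
  refine ⟨⟨m, hmN⟩, ?_⟩
  ext g₀
  -- ι* is surjective: find g with g ∘ ι = g₀
  obtain ⟨g, hg⟩ := MyAux.ext_lemma hD N.subtype N.injective_subtype g₀
  have : (LinearMap.applyₗ (⟨m, hmN⟩ : N) : (N →ₗ[R] D) →ₗ[R] D) g₀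
      = (LinearMap.applyₗ m : (M →ₗ[R] D) →ₗ[R] D) g := by
    rw [← hg]; rfl
  rw [this, hm, ← hg]
  rfl

end MyAux

lemma MyAux.cogenerator {R : Type u} [CommRing R]
    (En : MaximalSpectrum R → Type u) [∀ 𝔫, AddCommGroup (En 𝔫)] [∀ 𝔫, Module R (En 𝔫)]
    (j : ∀ 𝔫 : MaximalSpectrum R, (R ⧸ 𝔫.asIdeal) →ₗ[R] En 𝔫)
    (hj : ∀ 𝔫, IsInjectiveEnvelope R (j 𝔫))
    (X : Type u) [AddCommGroup X] [Module R X] (x : X) (hx : x ≠ 0) :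
    ∃ f : X →ₗ[R] (⨁ 𝔫, En 𝔫), f x ≠ 0 := by
  classical
  set φ := LinearMap.toSpanSingleton R X x with hφ
  have hker : LinearMap.ker φ ≠ ⊤ := by
    intro h
    apply hx
    have h1 : (1 : R) ∈ LinearMap.ker φ := h ▸ Submodule.mem_top
    simpa [φ, LinearMap.toSpanSingleton] using h1
  obtain ⟨𝔫', h𝔫'max, hle⟩ := Ideal.exists_le_maximal _ hker
  set 𝔫 : MaximalSpectrum R := ⟨𝔫', h𝔫'max⟩ with h𝔫
  set ψ : (R ⧸ LinearMap.ker φ) →ₗ[R] X :=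
    (LinearMap.range φ).subtype ∘ₗ φ.quotKerEquivRange.toLinearMap with hψ
  have hψinj : Function.Injective ψ :=
    (LinearMap.range φ).injective_subtype.comp φ.quotKerEquivRange.injective
  set θ : (R ⧸ LinearMap.ker φ) →ₗ[R] (R ⧸ 𝔫.asIdeal) :=
    Submodule.mapQ (LinearMap.ker φ) 𝔫.asIdeal LinearMap.id (by simpa using hle) with hθ
  obtain ⟨h, hh⟩ := (hj 𝔫).1.out ψ hψinj ((j 𝔫) ∘ₗ θ)
  refine ⟨(DirectSum.lof R _ En 𝔫) ∘ₗ h, ?_⟩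
  have hx1 : x = ψ (Submodule.Quotient.mk 1) := by
    rw [hψ]
    simp only [LinearMap.comp_apply, Submodule.subtype_apply]
    erw [LinearMap.quotKerEquivRange_apply_mk]
    simp [φ, LinearMap.toSpanSingleton]
  have hmk1 : (Submodule.Quotient.mk 1 : R ⧸ 𝔫.asIdeal) ≠ 0 := by
    rw [Ne, Submodule.Quotient.mk_eq_zero]
    exact fun h1 => h𝔫'max.ne_top (Ideal.eq_top_of_isUnit_mem _ h1 isUnit_one)
  have hj1 : (j 𝔫) (Submodule.Quotient.mk 1) ≠ 0 := by
    intro h0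
    exact hmk1 ((hj 𝔫).2.1 (by rw [h0, map_zero]))
  intro h0
  apply hj1
  have hcomp : ((DirectSum.lof R _ En 𝔫) ∘ₗ h) x
      = DirectSum.lof R _ En 𝔫 ((j 𝔫) (Submodule.Quotient.mk 1)) := by
    rw [LinearMap.comp_apply, hx1, hh]
    simp only [LinearMap.comp_apply, hθ]
    rw [Submodule.mapQ_apply]
    rfl
  rw [h0] at hcomp
  have := congrArg (DirectSum.component R _ En 𝔫) hcomp
  rw [map_zero, DirectSum.component.lof_self] at this
  exact this.symm

/-- Over a commutative Noetherian ring, every submodule and every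
quotient module of a Matlis reflexive module is Matlis reflexive.  Here the Matlis
dualizing module `⊕ E(R/𝔫)` is presented by a family `En 𝔫` of injective envelopes
`j 𝔫 : R/𝔫 → En 𝔫` of the residue fields of the maximal ideals `𝔫` of `R`. -/
theorem submodule_and_quotient_matlisReflexive_of_matlisReflexive [IsNoetherianRing R]
    (En : MaximalSpectrum R → Type u) [∀ 𝔫, AddCommGroup (En 𝔫)] [∀ 𝔫, Module R (En 𝔫)]
    (j : ∀ 𝔫 : MaximalSpectrum R, (R ⧸ 𝔫.asIdeal) →ₗ[R] En 𝔫)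
    (hj : ∀ 𝔫, IsInjectiveEnvelope R (j 𝔫))
    {M : Type u} [AddCommGroup M] [Module R M]
    (hM : IsMatlisReflexive R (⨁ 𝔫, En 𝔫) M) :
    (∀ N : Submodule R M, IsMatlisReflexive R (⨁ 𝔫, En 𝔫) N) ∧
      (∀ N : Submodule R M, IsMatlisReflexive R (⨁ 𝔫, En 𝔫) (M ⧸ N)) := by
  have hD : Module.Injective R (⨁ 𝔫, En 𝔫) :=
    MyAux.directSum_injective En (fun 𝔫 => (hj 𝔫).1)
  have hcog : ∀ (X : Type u) [AddCommGroup X] [Module R X] (x : X), x ≠ 0 →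
      ∃ f : X →ₗ[R] (⨁ 𝔫, En 𝔫), f x ≠ 0 :=
    fun X _ _ x hx => MyAux.cogenerator En j hj X x hx
  exact ⟨fun N => ⟨MyAux.ev_injective hcog N,
      MyAux.ev_sub_surjective hD hcog hM.2 N⟩,
    fun N => ⟨MyAux.ev_injective hcog (M ⧸ N),
      MyAux.ev_quot_surjective hD hM.2 N⟩⟩
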